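/- Let a₁, a₂, a₃, L > 0 with b_i = a_i + L, let 0 < τ < η, and define Ω = ∏_{i=1}^3 (a_i − η, b_i + η), D = ∏_{i=1}^3 (a_i, b_i), Ω₇ = ∏_{i=1}^3 (a_i − τ, b_i + τ), and the six boxes Ω₁,…,Ω₆ as: Ω₁ = (a₁−η,b₁+η)×(a₂−η,b₂+η)×(a₃−η,a₃), Ω₂ = (a₁−η,b₁+η)×(a₂−η,a₂)×(a₃−τ,b₃+τ), Ω₃ = (a₁−η,a₁)×(a₂−τ,b₂+τ)×(a₃−τ,b₃+τ), Ω₄ = (b₁,b₁+η)×(a₂−η,b₂+τ)×(a₃−τ,b₃+τ), Ω₅ = (a₁−η,b₁+η)×(b₂,b₂+η)×(a₃−τ,b₃+τ), Ω₆ = (a₁−η,b₁+η)×(a₂−η,b₂+η)×(b₃,b₃+η). Then Ω \ D̄ ⊆ ⋃_{j=1}^{6} Ω_j. -/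
import Mathlib


open Set

theorem seven_box_partition_neighbor_cover
    (a₁ a₂ a₃ L τ η : ℝ) (ha₁ : 0 < a₁) (ha₂ : 0 < a₂) (ha₃ : 0 < a₃) (hL : 0 < L)
    (hτ : 0 < τ) (hτη : τ < η)
    (b₁ b₂ b₃ : ℝ) (hb₁ : b₁ = a₁ + L) (hb₂ : b₂ = a₂ + L) (hb₃ : b₃ = a₃ + L) :
    let Ω : Set (ℝ × ℝ × ℝ) := Ioo (a₁ - η) (b₁ + η) ×ˢ Ioo (a₂ - η) (b₂ + η) ×ˢ Ioo (a₃ - η) (b₃ + η)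
    let D : Set (ℝ × ℝ × ℝ) := Ioo a₁ b₁ ×ˢ Ioo a₂ b₂ ×ˢ Ioo a₃ b₃
    let Ω₁ : Set (ℝ × ℝ × ℝ) := Ioo (a₁ - η) (b₁ + η) ×ˢ Ioo (a₂ - η) (b₂ + η) ×ˢ Ioo (a₃ - η) a₃
    let Ω₂ : Set (ℝ × ℝ × ℝ) := Ioo (a₁ - η) (b₁ + η) ×ˢ Ioo (a₂ - η) a₂ ×ˢ Ioo (a₃ - τ) (b₃ + τ)
    let Ω₃ : Set (ℝ × ℝ × ℝ) := Ioo (a₁ - η) a₁ ×ˢ Ioo (a₂ - τ) (b₂ + τ) ×ˢ Ioo (a₃ - τ) (b₃ + τ)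
    let Ω₄ : Set (ℝ × ℝ × ℝ) := Ioo b₁ (b₁ + η) ×ˢ Ioo (a₂ - η) (b₂ + τ) ×ˢ Ioo (a₃ - τ) (b₃ + τ)
    let Ω₅ : Set (ℝ × ℝ × ℝ) := Ioo (a₁ - η) (b₁ + η) ×ˢ Ioo b₂ (b₂ + η) ×ˢ Ioo (a₃ - τ) (b₃ + τ)
    let Ω₆ : Set (ℝ × ℝ × ℝ) := Ioo (a₁ - η) (b₁ + η) ×ˢ Ioo (a₂ - η) (b₂ + η) ×ˢ Ioo b₃ (b₃ + η)
    Ω \ closure D ⊆ Ω₁ ∪ Ω₂ ∪ Ω₃ ∪ Ω₄ ∪ Ω₅ ∪ Ω₆ := by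
  intro Ω D Ω₁ Ω₂ Ω₃ Ω₄ Ω₅ Ω₆
  have hab₁ : a₁ < b₁ := by linarith
  have hab₂ : a₂ < b₂ := by linarith
  have hab₃ : a₃ < b₃ := by linarith
  have hcl : closure D = Icc a₁ b₁ ×ˢ Icc a₂ b₂ ×ˢ Icc a₃ b₃ := by
    show closure (Ioo a₁ b₁ ×ˢ Ioo a₂ b₂ ×ˢ Ioo a₃ b₃) = _
    rw [closure_prod_eq, closure_prod_eq, closure_Ioo hab₁.ne, closure_Ioo hab₂.ne,
      closure_Ioo hab₃.ne]
  rintro ⟨x, y, z⟩ ⟨hΩ, hD⟩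
  rw [hcl] at hD
  simp only [mem_prod, mem_Ioo, mem_Icc, mem_union, not_and_or, not_le] at hΩ hD ⊢
  obtain ⟨⟨hx1, hx2⟩, ⟨hy1, hy2⟩, hz1, hz2⟩ := hΩ
  rcases lt_or_ge z a₃ with h3l | h3g
  · exact Or.inl <| Or.inl <| Or.inl <| Or.inl <| Or.inl ⟨⟨hx1, hx2⟩, ⟨hy1, hy2⟩, hz1, h3l⟩
  rcases lt_or_ge b₃ z with h3r | h3r
  · exact Or.inr ⟨⟨hx1, hx2⟩, ⟨hy1, hy2⟩, h3r, hz2⟩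
  have hz3 : a₃ - τ < z := by linarith
  have hz4 : z < b₃ + τ := by linarith
  rcases lt_or_ge y a₂ with h2l | h2g
  · exact Or.inl <| Or.inl <| Or.inl <| Or.inl <| Or.inr ⟨⟨hx1, hx2⟩, ⟨hy1, h2l⟩, hz3, hz4⟩
  rcases lt_or_ge b₂ y with h2r | h2r
  · exact Or.inl <| Or.inr ⟨⟨hx1, hx2⟩, ⟨h2r, hy2⟩, hz3, hz4⟩
  rcases lt_or_ge x a₁ with h1l | h1g
  · exact Or.inl <| Or.inl <| Or.inl <| Or.inr ⟨⟨hx1, h1l⟩, ⟨by linarith, by linarith⟩, hz3, hz4⟩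
  rcases lt_or_ge b₁ x with h1r | h1r
  · exact Or.inl <| Or.inl <| Or.inr ⟨⟨h1r, hx2⟩, ⟨hy1, by linarith⟩, hz3, hz4⟩
  rcases hD with (h | h) | (h | h) | h | h <;> linarith
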